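/- arXiv:2011.03892 — 2 statements merged into one kernel-verified Lean document; each statement's English description precedes it below -/
import Mathlib

section
/- (Section 4.2, Case 4) Assume S is a NO instance of k-OV: every k vectors v_1,…,v_k ∈ S (repetitions allowed) have a common coordinate x ∈ [d] with v_1[x] = ⋯ = v_k[x] = 1. Then for every vertex α ∈ V \ {u,v} and every vertex β ∈ B, we have d(α,β) ≤ k. -/
namespace DiamLB

/-! ## Generic directed-graph notions -/

/-- There is a directed walk of length `n` from `a` to `b`. -/
def HasWalkLen {V : Type*} (Adj : V → V → Prop) : ℕ → V → V → Prop
  | 0, a, b => a = b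
  | n + 1, a, b => ∃ c, Adj a c ∧ HasWalkLen Adj n c b

/-- `P 0, P 1, …, P n` is a directed walk. -/
def IsWalk {V : Type*} (Adj : V → V → Prop) (P : ℕ → V) (n : ℕ) : Prop :=
  ∀ t, t < n → Adj (P t) (P (t + 1))

/-- The shortest-path distance from `a` to `b` is at most `m`. -/
def DistLE {V : Type*} (Adj : V → V → Prop) (a b : V) (m : ℕ) : Prop :=
  ∃ n ≤ m, HasWalkLen Adj n a b

/-! ## The construction (Section 3, `k ≥ 5`) -/

/-- Boolean vectors of length `d`, i.e. elements of `{0,1}^d`. -/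
abbrev Vec (d : ℕ) := Fin d → Bool

/-- The all-ones vector. -/
def ones (d : ℕ) : Vec d := fun _ => true

/-- Tags naming the layers of the construction. -/
inductive Tag : Type
  | L (i : ℕ)
  | L' (i : ℕ)
  | A (i : ℕ)
  | B (i : ℕ)

/-- Potential vertices of the construction: a tagged partial tuple of vectors
(position `j : Fin k` holding the vector with 1-based index `j+1`) together with a
coordinate array `x` (1-based entry `x_ℓ` at position `ℓ-1 : Fin (k-1)`), plus the two
special vertices `uu` (the vertex `u`) and `vv` (the vertex `v`).  Vertices carrying no
coordinate array in the paper are modelled with the all-zero coordinate array. -/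
inductive Vert (k d : ℕ) : Type
  | node (tag : Tag) (p : Fin k → Option (Vec d)) (x : Fin (k - 1) → Fin d) : Vert k d
  | uu : Vert k d
  | vv : Vert k d

/-- The positions (0-based) satisfying `F` are filled by vectors of `S`, and the other
positions are empty. -/
def FillsS (k d : ℕ) (S : Finset (Vec d)) (F : ℕ → Prop) (p : Fin k → Option (Vec d)) :
    Prop :=
  ∀ j : Fin k, (F (j : ℕ) → ∃ a ∈ S, p j = some a) ∧ (¬ F (j : ℕ) → p j = none)

/-- The dummy (all-zero) coordinate array, used for vertices that carry no coordinate
array in the paper. -/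
def ZeroX (k d : ℕ) (x : Fin (k - 1) → Fin d) : Prop :=
  ∀ ℓ, (x ℓ : ℕ) = 0

/-- The compatibility condition between the vector tuple and the coordinate array of a
vertex of `L_i` (Table 1): for `1 ≤ j ≤ k-i` (the `a_j`), `a_j[x_ℓ] = 1` for all
`1 ≤ ℓ ≤ k-j`, and for `k-i+3 ≤ j ≤ k` (the `b_j`), `b_j[x_ℓ] = 1` for all
`k-j+1 ≤ ℓ ≤ k-1`.  (Everything is 0-based here: position `j` holds the vector with
1-based index `j+1`, and `x ℓ` is the 1-based coordinate `x_{ℓ+1}`.) -/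
def BitCond (k d : ℕ) (i : ℕ) (p : Fin k → Option (Vec d)) (x : Fin (k - 1) → Fin d) :
    Prop :=
  (∀ j : Fin k, (j : ℕ) < k - i → ∀ w, p j = some w →
    ∀ ℓ : Fin (k - 1), (ℓ : ℕ) < k - ((j : ℕ) + 1) → w (x ℓ) = true) ∧
  (∀ j : Fin k, k - i + 2 ≤ (j : ℕ) → ∀ w, p j = some w →
    ∀ ℓ : Fin (k - 1), k - ((j : ℕ) + 1) ≤ (ℓ : ℕ) → w (x ℓ) = true)

/-- The layer `L_i`, for `i = 1, …, k+1`. -/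
def setL (k d : ℕ) (S : Finset (Vec d)) (i : ℕ) : Set (Vert k d) :=
  { w | ∃ p x, w = Vert.node (Tag.L i) p x ∧
      ((i = 1 ∧ FillsS k d S (fun j => j < k - 1) p ∧ ZeroX k d x) ∨
       (i = k + 1 ∧ FillsS k d S (fun j => 1 ≤ j) p ∧ ZeroX k d x) ∨
       (2 ≤ i ∧ i ≤ k ∧ FillsS k d S (fun j => j < k - i ∨ k - i + 2 ≤ j) p ∧
         BitCond k d i p x)) }

/-- The layer `L'_i`, for `i = 3, …, k-1`: same vector tuples as `L_i` but with an
arbitrary coordinate array. -/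
def setL' (k d : ℕ) (S : Finset (Vec d)) (i : ℕ) : Set (Vert k d) :=
  { w | ∃ p x, w = Vert.node (Tag.L' i) p x ∧ 3 ≤ i ∧ i ≤ k - 1 ∧
      FillsS k d S (fun j => j < k - i ∨ k - i + 2 ≤ j) p }

/-- The set `A_i`, for `i = 4, …, k-1`: tuples `(a_1, …, a_{k-i})`. -/
def setA (k d : ℕ) (S : Finset (Vec d)) (i : ℕ) : Set (Vert k d) :=
  { w | ∃ p x, w = Vert.node (Tag.A i) p x ∧ 4 ≤ i ∧ i ≤ k - 1 ∧
      FillsS k d S (fun j => j < k - i) p ∧ ZeroX k d x }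

/-- The set `B_i`, for `i = 3, …, k-2`: tuples `(b_{k-i+3}, …, b_k)`. -/
def setB (k d : ℕ) (S : Finset (Vec d)) (i : ℕ) : Set (Vert k d) :=
  { w | ∃ p x, w = Vert.node (Tag.B i) p x ∧ 3 ≤ i ∧ i ≤ k - 2 ∧
      FillsS k d S (fun j => k - i + 2 ≤ j) p ∧ ZeroX k d x }

/-- `L = ∪_i L_i`. -/
def setLall (k d : ℕ) (S : Finset (Vec d)) : Set (Vert k d) := ⋃ i, setL k d S i

/-- `L' = ∪_i L'_i`. -/
def setL'all (k d : ℕ) (S : Finset (Vec d)) : Set (Vert k d) := ⋃ i, setL' k d S i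

/-- `A = ∪_i A_i`. -/
def setAall (k d : ℕ) (S : Finset (Vec d)) : Set (Vert k d) := ⋃ i, setA k d S i

/-- `B = ∪_i B_i`. -/
def setBall (k d : ℕ) (S : Finset (Vec d)) : Set (Vert k d) := ⋃ i, setB k d S i

/-- Level `i` is `L_i ∪ L'_i ∪ A_i ∪ B_i`. -/
def level (k d : ℕ) (S : Finset (Vec d)) (i : ℕ) : Set (Vert k d) :=
  setL k d S i ∪ setL' k d S i ∪ setA k d S i ∪ setB k d S i

/-- The vertex set of the graph `G`. -/
def VertexSet (k d : ℕ) (S : Finset (Vec d)) : Set (Vert k d) :=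
  setLall k d S ∪ setL'all k d S ∪ setAall k d S ∪ setBall k d S ∪ {Vert.uu, Vert.vv}

/-! ### Edges -/

/-- One orientation of the (undirected) swap edges.  Between `L_i` and `L_{i+1}`
(`2 ≤ i ≤ k-1`) the vector `a_{k-i}` (0-based position `k-i-1`) is exchanged for the
vector `b_{k-i+2}` (0-based position `k-i+1`), keeping the coordinate array; between
`L_1` and `L_2` the vector `a_{k-1}` is exchanged for a coordinate array; between
`L_{k+1}` and `L_k` the vector `b_2` is exchanged for a coordinate array. -/
def SwapE (k d : ℕ) (S : Finset (Vec d)) (α β : Vert k d) : Prop :=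
  (∃ i p x p' x', 2 ≤ i ∧ i ≤ k - 1 ∧
      α = Vert.node (Tag.L i) p x ∧ β = Vert.node (Tag.L (i + 1)) p' x' ∧
      α ∈ setL k d S i ∧ β ∈ setL k d S (i + 1) ∧ x' = x ∧
      (∀ j : Fin k, (j : ℕ) ≠ k - i - 1 → (j : ℕ) ≠ k - i + 1 → p' j = p j)) ∨
  (∃ p x p' x',
      α = Vert.node (Tag.L 1) p x ∧ β = Vert.node (Tag.L 2) p' x' ∧
      α ∈ setL k d S 1 ∧ β ∈ setL k d S 2 ∧
      (∀ j : Fin k, (j : ℕ) ≠ k - 2 → p' j = p j)) ∨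
  (∃ p x p' x',
      α = Vert.node (Tag.L (k + 1)) p x ∧ β = Vert.node (Tag.L k) p' x' ∧
      α ∈ setL k d S (k + 1) ∧ β ∈ setL k d S k ∧
      (∀ j : Fin k, (j : ℕ) ≠ 1 → p' j = p j))

/-- One orientation of the (undirected) vector-change edges between `L_i` and `L'_i`
(`3 ≤ i ≤ k-1`): same coordinate array, same vectors except possibly one of `a_{k-i}`
(position `k-i-1`) or `b_{k-i+3}` (position `k-i+2`). -/
def VecE (k d : ℕ) (S : Finset (Vec d)) (α β : Vert k d) : Prop :=
  ∃ i p x p' x', 3 ≤ i ∧ i ≤ k - 1 ∧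
    α = Vert.node (Tag.L i) p x ∧ β = Vert.node (Tag.L' i) p' x' ∧
    α ∈ setL k d S i ∧ β ∈ setL' k d S i ∧ x' = x ∧
    ((∀ j : Fin k, (j : ℕ) ≠ k - i - 1 → p' j = p j) ∨
     (∀ j : Fin k, (j : ℕ) ≠ k - i + 2 → p' j = p j))

/-- The (undirected, symmetric as stated) coordinate-change edges: two distinct
vertices with the same vector tuple, within each `L'_i`, between `L'_i` and `L_i`,
within `L_2` and within `L_k`. -/
def CoordE (k d : ℕ) (S : Finset (Vec d)) (α β : Vert k d) : Prop :=
  ∃ t t' p x x', α = Vert.node t p x ∧ β = Vert.node t' p x' ∧ α ≠ β ∧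
    ((∃ i, α ∈ setL' k d S i ∧ β ∈ setL' k d S i) ∨
     (∃ i, α ∈ setL' k d S i ∧ β ∈ setL k d S i) ∨
     (∃ i, α ∈ setL k d S i ∧ β ∈ setL' k d S i) ∨
     (α ∈ setL k d S 2 ∧ β ∈ setL k d S 2) ∨
     (α ∈ setL k d S k ∧ β ∈ setL k d S k))

/-- The directed `a`-type back edges: from `L_i ∪ L'_i` to the matching prefix in `A_i`;
from `A_i` to every vertex of `L'_4` with the matching prefix; and from `A_{k-1}`
to every vertex of `A_i` with the same first vector `a_1`. -/
def ABack (k d : ℕ) (S : Finset (Vec d)) (α β : Vert k d) : Prop :=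
  (∃ i t p x p' x', (α ∈ setL k d S i ∨ α ∈ setL' k d S i) ∧ β ∈ setA k d S i ∧
      α = Vert.node t p x ∧ β = Vert.node (Tag.A i) p' x' ∧
      (∀ j : Fin k, (j : ℕ) < k - i → p' j = p j)) ∨
  (∃ i p x p' x', α ∈ setA k d S i ∧ β ∈ setL' k d S 4 ∧
      α = Vert.node (Tag.A i) p x ∧ β = Vert.node (Tag.L' 4) p' x' ∧
      (∀ j : Fin k, (j : ℕ) < k - i → p' j = p j)) ∨
  (∃ i p x p' x', α ∈ setA k d S (k - 1) ∧ β ∈ setA k d S i ∧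
      α = Vert.node (Tag.A (k - 1)) p x ∧ β = Vert.node (Tag.A i) p' x' ∧
      (∀ j : Fin k, (j : ℕ) = 0 → p' j = p j))

/-- The directed `b`-type back edges: from `B_i` to every vertex of `L_i ∪ L'_i` with
the matching suffix; from every vertex of `L'_{k-2}` to the vertex of `B_i` with the
matching suffix; and from `B_i` to the vertex of `B_3` with the same last vector. -/
def BBack (k d : ℕ) (S : Finset (Vec d)) (α β : Vert k d) : Prop :=
  (∃ i t p x p' x', α ∈ setB k d S i ∧ (β ∈ setL k d S i ∨ β ∈ setL' k d S i) ∧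
      α = Vert.node (Tag.B i) p x ∧ β = Vert.node t p' x' ∧
      (∀ j : Fin k, k - i + 2 ≤ (j : ℕ) → p j = p' j)) ∨
  (∃ i p x p' x', α ∈ setL' k d S (k - 2) ∧ β ∈ setB k d S i ∧
      α = Vert.node (Tag.L' (k - 2)) p x ∧ β = Vert.node (Tag.B i) p' x' ∧
      (∀ j : Fin k, k - i + 2 ≤ (j : ℕ) → p' j = p j)) ∨
  (∃ i p x p' x', α ∈ setB k d S i ∧ β ∈ setB k d S 3 ∧
      α = Vert.node (Tag.B i) p x ∧ β = Vert.node (Tag.B 3) p' x' ∧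
      (∀ j : Fin k, (j : ℕ) = k - 1 → p' j = p j))

/-- The directed `ba`-type back edges: from every vertex of `B_i` to every vertex of
`A_i`, for `4 ≤ i ≤ k-2`. -/
def BABack (k d : ℕ) (S : Finset (Vec d)) (α β : Vert k d) : Prop :=
  ∃ i, 4 ≤ i ∧ i ≤ k - 2 ∧ α ∈ setB k d S i ∧ β ∈ setA k d S i

/-- The directed fixed edges: `L'_{k-2} → v`, `v → L_1 ∪ L_2`, `L_k ∪ L_{k+1} → u`,
and `u → L'_4`. -/
def FixedE (k d : ℕ) (S : Finset (Vec d)) (α β : Vert k d) : Prop :=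
  (α ∈ setL' k d S (k - 2) ∧ β = Vert.vv) ∨
  (α = Vert.vv ∧ (β ∈ setL k d S 1 ∨ β ∈ setL k d S 2)) ∨
  ((α ∈ setL k d S k ∨ α ∈ setL k d S (k + 1)) ∧ β = Vert.uu) ∨
  (α = Vert.uu ∧ β ∈ setL' k d S 4)

/-- The adjacency relation of the graph `G` (undirected edges appear in both
directions). -/
def Adj (k d : ℕ) (S : Finset (Vec d)) (α β : Vert k d) : Prop :=
  SwapE k d S α β ∨ SwapE k d S β α ∨ VecE k d S α β ∨ VecE k d S β α ∨
  CoordE k d S α β ∨ ABack k d S α β ∨ BBack k d S α β ∨ BABack k d S α β ∨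
  FixedE k d S α β

/-! ### Loops and covers (Section 5) -/

/-- `t` is the first time at which the walk `P` (of length `n`) visits `L_i`. -/
def FirstVisit (k d : ℕ) (S : Finset (Vec d)) (P : ℕ → Vert k d) (n i t : ℕ) : Prop :=
  t ≤ n ∧ P t ∈ setL k d S i ∧ ∀ s, s < t → P s ∉ setL k d S i

/-- `t` is the last time at which the walk `P` (of length `n`) visits `L_i`. -/
def LastVisit (k d : ℕ) (S : Finset (Vec d)) (P : ℕ → Vert k d) (n i t : ℕ) : Prop :=
  t ≤ n ∧ P t ∈ setL k d S i ∧ ∀ s, t < s → s ≤ n → P s ∉ setL k d S i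

/-- The layer `L_i` is in a loop: the walk `P` visits `L_i` at least twice. -/
def InLoop (k d : ℕ) (S : Finset (Vec d)) (P : ℕ → Vert k d) (n i : ℕ) : Prop :=
  ∃ t1 t2, t1 < t2 ∧ t2 ≤ n ∧ P t1 ∈ setL k d S i ∧ P t2 ∈ setL k d S i

/-- The walk `P` visits `A`. -/
def VisitsA (k d : ℕ) (S : Finset (Vec d)) (P : ℕ → Vert k d) (n : ℕ) : Prop :=
  ∃ t ≤ n, P t ∈ setAall k d S

/-- The walk `P` visits `B`. -/
def VisitsB (k d : ℕ) (S : Finset (Vec d)) (P : ℕ → Vert k d) (n : ℕ) : Prop :=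
  ∃ t ≤ n, P t ∈ setBall k d S

/-- The layer `L_i` covers the layer `L_m` (with respect to the walk `P` of length `n`):
for `3 ≤ i ≤ k-1`, `L_i` covers `L_{i-1}` if `L_{i-1}` is not in a loop, `L_i` is in a
loop, and the first and last vertices of `P` in `L_i` differ in the vector `b_{k-i+3}`
(0-based position `k-i+2`) and in the coordinate array; symmetrically `L_i` covers
`L_{i+1}` using the vector `a_{k-i}` (0-based position `k-i-1`).  Additionally `L_4`
covers both `L_3` and `L_2` if `P` visits `A`, and `L_{k-2}` covers both `L_{k-1}` and
`L_k` if `P` visits `B`. -/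
def Covers (k d : ℕ) (S : Finset (Vec d)) (P : ℕ → Vert k d) (n : ℕ) (i m : ℕ) : Prop :=
  (3 ≤ i ∧ i ≤ k - 1 ∧ m + 1 = i ∧ ¬ InLoop k d S P n m ∧ InLoop k d S P n i ∧
    ∃ t1 t2 p1 x1 p2 x2, FirstVisit k d S P n i t1 ∧ LastVisit k d S P n i t2 ∧
      P t1 = Vert.node (Tag.L i) p1 x1 ∧ P t2 = Vert.node (Tag.L i) p2 x2 ∧
      (∀ j : Fin k, (j : ℕ) = k - i + 2 → p1 j ≠ p2 j) ∧ x1 ≠ x2) ∨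
  (3 ≤ i ∧ i ≤ k - 1 ∧ m = i + 1 ∧ ¬ InLoop k d S P n m ∧ InLoop k d S P n i ∧
    ∃ t1 t2 p1 x1 p2 x2, FirstVisit k d S P n i t1 ∧ LastVisit k d S P n i t2 ∧
      P t1 = Vert.node (Tag.L i) p1 x1 ∧ P t2 = Vert.node (Tag.L i) p2 x2 ∧
      (∀ j : Fin k, (j : ℕ) = k - i - 1 → p1 j ≠ p2 j) ∧ x1 ≠ x2) ∨
  (i = 4 ∧ (m = 3 ∨ m = 2) ∧ VisitsA k d S P n) ∨
  (i = k - 2 ∧ (m = k - 1 ∨ m = k) ∧ VisitsB k d S P n)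

/-!
A NO instance gives, for any two `k`-tuples of vectors `qa` (the `a`'s) and `qb` (the `b`'s),
a coordinate array `x` in which every `x_ℓ` is a common 1-coordinate of the `k` vectors `qa_j`
(`j + ℓ + 2 ≤ k`) and `qb_j` (otherwise).  Such an `x` is compatible with the windows of
`(qa, qb)` at all levels `2, …, k` at once, so these windows lie in `L` and are joined by swap
edges.  Every vertex reaches within a few steps a window whose `b`'s are those of `β`; from
there it walks to level `k - 2`, steps to `L'_{k-2}` and enters `β` by a back edge.  Vertices
of high levels take the shortcuts through `A_i` or `u` into `L'_4`; for `k = 5` these do not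
pay off, but then `L'_3` is already `L'_{k-2}`.
-/

section Walks

variable {V : Type*} {A : V → V → Prop} {a b c : V} {m n : ℕ}

theorem HasWalkLen.append (h₁ : HasWalkLen A m a b) (h₂ : HasWalkLen A n b c) :
    HasWalkLen A (m + n) a c := by
  induction m generalizing a with
  | zero =>
    obtain rfl : a = b := h₁
    rwa [Nat.zero_add]
  | succ m ih =>
    obtain ⟨e, he, h₁⟩ := h₁
    rw [Nat.add_right_comm]
    exact ⟨e, he, ih h₁⟩

theorem DistLE.refl : DistLE A a a 0 := ⟨0, le_rfl, rfl⟩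

theorem DistLE.of_adj (h : A a b) : DistLE A a b 1 := ⟨1, le_rfl, b, h, rfl⟩

theorem DistLE.mono (h : DistLE A a b m) (hmn : m ≤ n) : DistLE A a b n :=
  let ⟨l, hl, hw⟩ := h
  ⟨l, hl.trans hmn, hw⟩

theorem DistLE.trans (h₁ : DistLE A a b m) (h₂ : DistLE A b c n) : DistLE A a c (m + n) := by
  obtain ⟨l₁, hl₁, hw₁⟩ := h₁
  obtain ⟨l₂, hl₂, hw₂⟩ := h₂
  exact ⟨l₁ + l₂, by omega, hw₁.append hw₂⟩

theorem DistLE.cons (hab : A a b) (h : DistLE A b c n) : DistLE A a c (n + 1) :=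
  ((DistLE.of_adj hab).trans h).mono (by omega)

end Walks

section Construction

variable {k d : ℕ} {S : Finset (Vec d)} {α β : Vert k d}

theorem adj_of_swapE (h : SwapE k d S α β) : Adj k d S α β := Or.inl h

theorem adj_of_swapE_symm (h : SwapE k d S β α) : Adj k d S α β := Or.inr (Or.inl h)

theorem adj_of_vecE (h : VecE k d S α β) : Adj k d S α β := Or.inr (Or.inr (Or.inl h))

theorem adj_of_vecE_symm (h : VecE k d S β α) : Adj k d S α β :=
  Or.inr (Or.inr (Or.inr (Or.inl h)))

theorem adj_of_coordE (h : CoordE k d S α β) : Adj k d S α β :=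
  Or.inr (Or.inr (Or.inr (Or.inr (Or.inl h))))

theorem adj_of_aBack (h : ABack k d S α β) : Adj k d S α β :=
  Or.inr (Or.inr (Or.inr (Or.inr (Or.inr (Or.inl h)))))

theorem adj_of_bBack (h : BBack k d S α β) : Adj k d S α β :=
  Or.inr (Or.inr (Or.inr (Or.inr (Or.inr (Or.inr (Or.inl h))))))

theorem adj_of_baBack (h : BABack k d S α β) : Adj k d S α β :=
  Or.inr (Or.inr (Or.inr (Or.inr (Or.inr (Or.inr (Or.inr (Or.inl h)))))))

theorem adj_of_fixedE (h : FixedE k d S α β) : Adj k d S α β :=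
  Or.inr (Or.inr (Or.inr (Or.inr (Or.inr (Or.inr (Or.inr (Or.inr h)))))))

def IsNoInstance (k d : ℕ) (S : Finset (Vec d)) : Prop :=
  ∀ f : Fin k → Vec d, (∀ j, f j ∈ S) → ∃ x : Fin d, ∀ j, f j x = true

/-- The tuple `(qa_1, …, qa_{k-c}, qb_{k-c+3}, …, qb_k)` of the layers of level `c`. -/
def window (qa qb : Fin k → Vec d) (c : ℕ) : Fin k → Option (Vec d) :=
  fun j => if (j : ℕ) < k - c then some (qa j) else
    if k - c + 2 ≤ (j : ℕ) then some (qb j) else none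

def GoodCoords (qa qb : Fin k → Vec d) (x : Fin (k - 1) → Fin d) : Prop :=
  ∀ (ℓ : Fin (k - 1)) (j : Fin k),
    ((j : ℕ) + ℓ + 2 ≤ k → qa j (x ℓ) = true) ∧ (k < (j : ℕ) + ℓ + 2 → qb j (x ℓ) = true)

variable {qa qb : Fin k → Vec d} {x : Fin (k - 1) → Fin d} {c : ℕ}

theorem exists_goodCoords (hno : IsNoInstance k d S) (hqa : ∀ j, qa j ∈ S)
    (hqb : ∀ j, qb j ∈ S) : ∃ x, GoodCoords qa qb x := by
  have (ℓ : Fin (k - 1)) : ∃ y : Fin d, ∀ j : Fin k,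
      ((j : ℕ) + ℓ + 2 ≤ k → qa j y = true) ∧ (k < (j : ℕ) + ℓ + 2 → qb j y = true) := by
    obtain ⟨y, hy⟩ := hno (fun j => if (j : ℕ) + ℓ + 2 ≤ k then qa j else qb j)
      (fun j => by split <;> simp [hqa, hqb])
    refine ⟨y, fun j => ⟨fun h => ?_, fun h => ?_⟩⟩
    · simpa [h] using hy j
    · simpa [show ¬ ((j : ℕ) + ℓ + 2 ≤ k) by omega] using hy j
  choose x hx using this
  exact ⟨x, hx⟩

theorem fillsS_window (hqa : ∀ j, qa j ∈ S) (hqb : ∀ j, qb j ∈ S) (c : ℕ) :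
    FillsS k d S (fun j => j < k - c ∨ k - c + 2 ≤ j) (window qa qb c) := by
  intro j
  by_cases h₁ : (j : ℕ) < k - c
  · simp [window, h₁, hqa j]
  by_cases h₂ : k - c + 2 ≤ (j : ℕ)
  · simp [window, h₁, h₂, hqb j]
  · simp [window, h₁, h₂]

theorem bitCond_window (hx : GoodCoords qa qb x) (c : ℕ) :
    BitCond k d c (window qa qb c) x := by
  constructor
  · intro j hj w hw ℓ hℓ
    rw [window, if_pos hj, Option.some_inj] at hw
    exact hw ▸ (hx ℓ j).1 (by omega)
  · intro j hj w hw ℓ hℓ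
    rw [window, if_neg (by omega), if_pos hj, Option.some_inj] at hw
    exact hw ▸ (hx ℓ j).2 (by omega)

theorem window_mem_setL (hqa : ∀ j, qa j ∈ S) (hqb : ∀ j, qb j ∈ S) (hx : GoodCoords qa qb x)
    (hc : 2 ≤ c) (hck : c ≤ k) : Vert.node (Tag.L c) (window qa qb c) x ∈ setL k d S c :=
  ⟨_, _, rfl, Or.inr (Or.inr ⟨hc, hck, fillsS_window hqa hqb c, bitCond_window hx c⟩)⟩

theorem window_mem_setL' (hqa : ∀ j, qa j ∈ S) (hqb : ∀ j, qb j ∈ S) (hc : 3 ≤ c)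
    (hck : c ≤ k - 1) (x : Fin (k - 1) → Fin d) :
    Vert.node (Tag.L' c) (window qa qb c) x ∈ setL' k d S c :=
  ⟨_, _, rfl, hc, hck, fillsS_window hqa hqb c⟩

theorem swapE_window (hqa : ∀ j, qa j ∈ S) (hqb : ∀ j, qb j ∈ S) (hx : GoodCoords qa qb x)
    (hc : 2 ≤ c) (hck : c + 1 ≤ k) :
    SwapE k d S (Vert.node (Tag.L c) (window qa qb c) x)
      (Vert.node (Tag.L (c + 1)) (window qa qb (c + 1)) x) := by
  refine Or.inl ⟨c, _, x, _, x, hc, by omega, rfl, rfl, window_mem_setL hqa hqb hx hc (by omega),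
    window_mem_setL hqa hqb hx (by omega) hck, rfl, fun j hj₁ hj₂ => ?_⟩
  have := j.isLt
  simp only [window]
  split_ifs <;> first | rfl | omega

theorem distLE_window_up (hqa : ∀ j, qa j ∈ S) (hqb : ∀ j, qb j ∈ S)
    (hx : GoodCoords qa qb x) (n : ℕ) (hc : 2 ≤ c) (hck : c + n ≤ k) :
    DistLE (Adj k d S) (Vert.node (Tag.L c) (window qa qb c) x)
      (Vert.node (Tag.L (c + n)) (window qa qb (c + n)) x) n := by
  induction n generalizing c with
  | zero => exact DistLE.refl
  | succ n ih =>
    rw [show c + (n + 1) = c + 1 + n by omega]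
    exact .cons (adj_of_swapE (swapE_window hqa hqb hx hc (by omega))) (ih (by omega) (by omega))

theorem distLE_window_down (hqa : ∀ j, qa j ∈ S) (hqb : ∀ j, qb j ∈ S)
    (hx : GoodCoords qa qb x) (n : ℕ) (hc : 2 ≤ c) (hck : c + n ≤ k) :
    DistLE (Adj k d S) (Vert.node (Tag.L (c + n)) (window qa qb (c + n)) x)
      (Vert.node (Tag.L c) (window qa qb c) x) n := by
  induction n with
  | zero => exact DistLE.refl
  | succ n ih =>
    rw [← Nat.add_assoc]
    exact .cons (adj_of_swapE_symm (swapE_window hqa hqb hx (by omega) (by omega)))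
      (ih (by omega))

theorem distLE_window {c' n : ℕ} (hqa : ∀ j, qa j ∈ S) (hqb : ∀ j, qb j ∈ S)
    (hx : GoodCoords qa qb x) (hc : 2 ≤ c) (hck : c ≤ k) (hc' : 2 ≤ c') (hck' : c' ≤ k)
    (hn : c ≤ c' + n) (hn' : c' ≤ c + n) :
    DistLE (Adj k d S) (Vert.node (Tag.L c) (window qa qb c) x)
      (Vert.node (Tag.L c') (window qa qb c') x) n := by
  rcases le_total c c' with h | h
  · obtain ⟨m, rfl⟩ := Nat.exists_eq_add_of_le h
    exact (distLE_window_up hqa hqb hx m hc hck').mono (by omega)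
  · obtain ⟨m, rfl⟩ := Nat.exists_eq_add_of_le h
    exact (distLE_window_down hqa hqb hx m hc' hck).mono (by omega)

theorem window_three_congr (hk : 3 ≤ k) (qa qb qb' : Fin k → Vec d) (j : Fin k)
    (hj : (j : ℕ) ≠ k - 3 + 2) : window qa qb' 3 j = window qa qb 3 j := by
  have := j.isLt
  simp only [window]
  split_ifs <;> first | rfl | omega

theorem coordE_L'_L {p : Fin k → Option (Vec d)} {x x' : Fin (k - 1) → Fin d}
    (hα : Vert.node (Tag.L' c) p x ∈ setL' k d S c)
    (hβ : Vert.node (Tag.L c) p x' ∈ setL k d S c) :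
    CoordE k d S (Vert.node (Tag.L' c) p x) (Vert.node (Tag.L c) p x') :=
  ⟨_, _, p, x, x', rfl, rfl, by simp, Or.inr (Or.inl ⟨c, hα, hβ⟩)⟩

def aVecs (p : Fin k → Option (Vec d)) (c : ℕ) : Fin k → Vec d :=
  fun j => if (j : ℕ) < k - c then (p j).getD (ones d) else ones d

def bVecs (p : Fin k → Option (Vec d)) (c : ℕ) : Fin k → Vec d :=
  fun j => if k - c + 2 ≤ (j : ℕ) then (p j).getD (ones d) else ones d

variable {p : Fin k → Option (Vec d)} {F : ℕ → Prop}

theorem getD_mem_of_fillsS (hone : ones d ∈ S) (hp : FillsS k d S F p) (j : Fin k) :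
    (p j).getD (ones d) ∈ S := by
  by_cases h : F j
  · obtain ⟨a, ha, hpj⟩ := (hp j).1 h
    simpa [hpj] using ha
  · simpa [(hp j).2 h] using hone

theorem aVecs_mem (hone : ones d ∈ S) (hp : FillsS k d S F p) (c : ℕ) (j : Fin k) :
    aVecs p c j ∈ S := by
  unfold aVecs
  split
  exacts [getD_mem_of_fillsS hone hp j, hone]

theorem bVecs_mem (hone : ones d ∈ S) (hp : FillsS k d S F p) (c : ℕ) (j : Fin k) :
    bVecs p c j ∈ S := by
  unfold bVecs
  split
  exacts [getD_mem_of_fillsS hone hp j, hone]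

theorem getD_eq_of_fillsS (hp : FillsS k d S F p) {j : Fin k} (hj : F j) :
    some ((p j).getD (ones d)) = p j := by
  obtain ⟨a, -, ha⟩ := (hp j).1 hj
  simp [ha]

theorem window_aVecs_bVecs (hp : FillsS k d S (fun j => j < k - c ∨ k - c + 2 ≤ j) p) :
    window (aVecs p c) (bVecs p c) c = p := by
  funext j
  simp only [window, aVecs, bVecs]
  split_ifs with h₁ h₂
  · exact getD_eq_of_fillsS hp (Or.inl h₁)
  · exact getD_eq_of_fillsS hp (Or.inr h₂)
  · exact ((hp j).2 (by omega)).symm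

theorem goodCoords_aVecs_bVecs (hp : FillsS k d S (fun j => j < k - c ∨ k - c + 2 ≤ j) p)
    (hb : BitCond k d c p x) : GoodCoords (aVecs p c) (bVecs p c) x := by
  intro ℓ j
  constructor
  · intro h
    unfold aVecs
    split
    · next h₁ =>
      obtain ⟨a, -, ha⟩ := (hp j).1 (Or.inl h₁)
      simpa [ha] using hb.1 j h₁ a ha ℓ (by omega)
    · rfl
  · intro h
    unfold bVecs
    split
    · next h₂ =>
      obtain ⟨a, -, ha⟩ := (hp j).1 (Or.inr h₂)
      simpa [ha] using hb.2 j h₂ a ha ℓ (by omega)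
    · rfl

theorem exists_window_of_mem_setL (hone : ones d ∈ S) (hα : α ∈ setL k d S c) (hc : 2 ≤ c)
    (hck : c ≤ k) : ∃ qa qb x, (∀ j, qa j ∈ S) ∧ (∀ j, qb j ∈ S) ∧ GoodCoords qa qb x ∧
      α = Vert.node (Tag.L c) (window qa qb c) x := by
  obtain ⟨p, x, rfl, ⟨rfl, -⟩ | ⟨rfl, -⟩ | ⟨-, -, hp, hb⟩⟩ := hα
  · omega
  · omega
  · exact ⟨_, _, x, aVecs_mem hone hp c, bVecs_mem hone hp c, goodCoords_aVecs_bVecs hp hb,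
      by rw [window_aVecs_bVecs hp]⟩

theorem exists_mem_setL_distLE {c' n : ℕ} (hone : ones d ∈ S) (hα : α ∈ setL k d S c)
    (hc : 2 ≤ c) (hck : c ≤ k) (hc' : 2 ≤ c') (hck' : c' ≤ k) (hn : c ≤ c' + n)
    (hn' : c' ≤ c + n) : ∃ γ ∈ setL k d S c', DistLE (Adj k d S) α γ n := by
  obtain ⟨qa, qb, x, hqa, hqb, hx, rfl⟩ := exists_window_of_mem_setL hone hα hc hck
  exact ⟨_, window_mem_setL hqa hqb hx hc' hck', distLE_window hqa hqb hx hc hck hc' hck' hn hn'⟩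

theorem exists_adj_mem_setL_of_mem_setL' (hno : IsNoInstance k d S) (hone : ones d ∈ S)
    (hα : α ∈ setL' k d S c) : ∃ γ ∈ setL k d S c, Adj k d S α γ := by
  obtain ⟨p, x, rfl, hc, hck, hp⟩ := hα
  obtain ⟨x', hx'⟩ := exists_goodCoords hno (aVecs_mem hone hp c) (bVecs_mem hone hp c)
  have hγ := window_mem_setL (c := c) (aVecs_mem hone hp c) (bVecs_mem hone hp c) hx'
    (by omega) (by omega)
  rw [window_aVecs_bVecs hp] at hγ
  exact ⟨_, hγ, adj_of_coordE (coordE_L'_L ⟨p, x, rfl, hc, hck, hp⟩ hγ)⟩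

theorem exists_adj_mem_setL_of_mem_setL_succ (hno : IsNoInstance k d S) (hone : ones d ∈ S)
    (hk : 2 ≤ k) (hα : α ∈ setL k d S (k + 1)) : ∃ γ ∈ setL k d S k, Adj k d S α γ := by
  obtain ⟨p, x, rfl, h⟩ := hα
  obtain ⟨hp, hz⟩ : FillsS k d S (fun j => 1 ≤ j) p ∧ ZeroX k d x := by
    rcases h with ⟨h, -⟩ | ⟨-, h⟩ | ⟨-, h, -⟩
    · omega
    · exact h
    · omega
  have hqa : ∀ j : Fin k, ones d ∈ S := fun _ => hone
  obtain ⟨x', hx'⟩ := exists_goodCoords hno hqa (bVecs_mem hone hp k)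
  have hγ := window_mem_setL hqa (bVecs_mem hone hp k) hx' hk le_rfl
  refine ⟨_, hγ, adj_of_swapE (Or.inr (Or.inr ⟨p, x, _, x', rfl, rfl,
    ⟨p, x, rfl, Or.inr (Or.inl ⟨rfl, hp, hz⟩)⟩, hγ, fun j hj => ?_⟩))⟩
  simp only [window, bVecs]
  split_ifs with h₁ h₂
  · omega
  · exact getD_eq_of_fillsS hp (by omega)
  · exact ((hp j).2 (by omega)).symm

theorem truncate_mem_setA (hd : 0 < d)
    (hp : ∀ j : Fin k, (j : ℕ) < k - c → ∃ a ∈ S, p j = some a) (hc : 4 ≤ c) (hck : c ≤ k - 1) :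
    Vert.node (Tag.A c) (fun j => if (j : ℕ) < k - c then p j else none) (fun _ => ⟨0, hd⟩) ∈
      setA k d S c :=
  ⟨_, _, rfl, hc, hck, fun j => ⟨fun hj => by simpa [hj] using hp j hj, fun hj => by simp [hj]⟩,
    fun _ => rfl⟩

theorem exists_adj_mem_setA (hd : 0 < d) (hα : α ∈ setL k d S c ∨ α ∈ setL' k d S c)
    (hc : 4 ≤ c) (hck : c ≤ k - 1) : ∃ γ ∈ setA k d S c, Adj k d S α γ := by
  obtain ⟨t, p, x, rfl, hp⟩ : ∃ t p x, α = Vert.node t p x ∧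
      ∀ j : Fin k, (j : ℕ) < k - c → ∃ a ∈ S, p j = some a := by
    rcases hα with ⟨p, x, rfl, ⟨rfl, -⟩ | ⟨rfl, -⟩ | ⟨-, -, hp, -⟩⟩ | ⟨p, x, rfl, -, -, hp⟩
    · omega
    · omega
    · exact ⟨_, p, x, rfl, fun j hj => (hp j).1 (Or.inl hj)⟩
    · exact ⟨_, p, x, rfl, fun j hj => (hp j).1 (Or.inl hj)⟩
  refine ⟨_, truncate_mem_setA hd hp hc hck, adj_of_aBack (Or.inl ⟨c, t, p, x, _, _, hα,
    truncate_mem_setA hd hp hc hck, rfl, rfl, fun j hj => if_pos hj⟩)⟩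

end Construction

section Target

variable {k d : ℕ} {S : Finset (Vec d)} {qb : Fin k → Vec d} {α β : Vert k d} {c : ℕ}

/-- The only property of a vertex `β ∈ B` that the argument uses. -/
def SuffixTarget (S : Finset (Vec d)) (qb : Fin k → Vec d) (β : Vert k d) : Prop :=
  (∀ j, qb j ∈ S) ∧ ∀ qa : Fin k → Vec d, (∀ j, qa j ∈ S) → ∀ x,
    Adj k d S (Vert.node (Tag.L' (k - 2)) (window qa qb (k - 2)) x) β

theorem exists_suffixTarget_of_mem_setBall (hk : 5 ≤ k) (hone : ones d ∈ S)
    (hβ : β ∈ setBall k d S) : ∃ qb, SuffixTarget S qb β := by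
  obtain ⟨i, hβ⟩ := Set.mem_iUnion.1 hβ
  have ⟨p, x, hβp, hi, hik, hp, _⟩ := hβ
  subst hβp
  refine ⟨bVecs p i, bVecs_mem hone hp i, fun qa hqa x' => adj_of_bBack (Or.inr (Or.inl
    ⟨i, _, x', p, x, window_mem_setL' hqa (bVecs_mem hone hp i) (by omega) (by omega) x', hβ,
      rfl, rfl, fun j hj => ?_⟩))⟩
  simp only [window, bVecs]
  rw [if_neg (by omega), if_pos (by omega), if_pos hj]
  exact (getD_eq_of_fillsS hp hj).symm

variable {qa : Fin k → Vec d} {x : Fin (k - 1) → Fin d} {n : ℕ}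

theorem distLE_L_window_target (hk : 5 ≤ k) (hβ : SuffixTarget S qb β) (hqa : ∀ j, qa j ∈ S)
    (hx : GoodCoords qa qb x) (hc : 2 ≤ c) (hck : c ≤ k) (hn : c ≤ k - 2 + n)
    (hn' : k - 2 ≤ c + n) :
    DistLE (Adj k d S) (Vert.node (Tag.L c) (window qa qb c) x) β (n + 2) := by
  have hvec : VecE k d S (Vert.node (Tag.L (k - 2)) (window qa qb (k - 2)) x)
      (Vert.node (Tag.L' (k - 2)) (window qa qb (k - 2)) x) :=
    ⟨k - 2, _, x, _, x, by omega, by omega, rfl, rfl,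
      window_mem_setL hqa hβ.1 hx (by omega) (by omega),
      window_mem_setL' hqa hβ.1 (by omega) (by omega) x, rfl, Or.inl fun _ _ => rfl⟩
  exact (distLE_window hqa hβ.1 hx hc hck (by omega) (by omega) hn hn').trans
    (.cons (adj_of_vecE hvec) (.of_adj (hβ.2 qa hqa x)))

theorem distLE_L'_window_target (hk : 5 ≤ k) (hno : IsNoInstance k d S)
    (hβ : SuffixTarget S qb β) (hqa : ∀ j, qa j ∈ S) (hc : 3 ≤ c) (hck : c ≤ k - 1)
    (hn : c ≤ k - 2 + n) (hn' : k - 2 ≤ c + n) (x : Fin (k - 1) → Fin d) :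
    DistLE (Adj k d S) (Vert.node (Tag.L' c) (window qa qb c) x) β (n + 3) := by
  obtain ⟨x', hx'⟩ := exists_goodCoords hno hqa hβ.1
  exact .cons (adj_of_coordE (coordE_L'_L (window_mem_setL' hqa hβ.1 hc hck x)
      (window_mem_setL hqa hβ.1 hx' (by omega) (by omega))))
    (distLE_L_window_target hk hβ hqa hx' (by omega) (by omega) hn hn')

theorem exists_adj_L'_three_of_mem_setL_three (hk : 5 ≤ k) (hone : ones d ∈ S)
    (hqb : ∀ j, qb j ∈ S) (hα : α ∈ setL k d S 3) :
    ∃ qa x, (∀ j, qa j ∈ S) ∧ Adj k d S α (Vert.node (Tag.L' 3) (window qa qb 3) x) := by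
  obtain ⟨qa, qb', x, hqa, -, -, rfl⟩ := exists_window_of_mem_setL hone hα (by omega) (by omega)
  exact ⟨qa, x, hqa, adj_of_vecE ⟨3, _, x, _, x, le_rfl, by omega, rfl, rfl, hα,
    window_mem_setL' hqa hqb le_rfl (by omega) x, rfl,
    Or.inr (window_three_congr (by omega) qa qb' qb)⟩⟩

theorem distLE_of_mem_setL_three (hk : 5 ≤ k) (hno : IsNoInstance k d S) (hone : ones d ∈ S)
    (hβ : SuffixTarget S qb β) (hα : α ∈ setL k d S 3) : DistLE (Adj k d S) α β (k - 1) := by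
  obtain ⟨qa, x, hqa, hadj⟩ := exists_adj_L'_three_of_mem_setL_three hk hone hβ.1 hα
  exact (DistLE.cons hadj (distLE_L'_window_target hk hno hβ hqa le_rfl (by omega) (n := k - 5)
    (by omega) (by omega) x)).mono (by omega)

theorem distLE_of_mem_setL_three_of_eq_five (hk : k = 5) (hone : ones d ∈ S)
    (hβ : SuffixTarget S qb β) (hα : α ∈ setL k d S 3) : DistLE (Adj k d S) α β 2 := by
  subst hk
  obtain ⟨qa, x, hqa, hadj⟩ := exists_adj_L'_three_of_mem_setL_three le_rfl hone hβ.1 hα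
  exact .cons hadj (.of_adj (hβ.2 qa hqa x))

theorem distLE_of_mem_setA (hk : 5 ≤ k) (hno : IsNoInstance k d S) (hone : ones d ∈ S)
    (hβ : SuffixTarget S qb β) (hα : α ∈ setA k d S c) (hn : 4 ≤ k - 2 + n)
    (hn' : k - 2 ≤ 4 + n) : DistLE (Adj k d S) α β (n + 4) := by
  have ⟨p, x, hαp, hc, hck, hp, _⟩ := hα
  subst hαp
  have hqa := aVecs_mem hone hp c
  refine .cons (adj_of_aBack (Or.inr (Or.inl ⟨c, p, x, _, x, hα,
    window_mem_setL' hqa hβ.1 (by omega) (by omega) x, rfl, rfl, fun j hj => ?_⟩)))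
    (distLE_L'_window_target hk hno hβ hqa (by omega) (by omega) hn hn' x)
  simp only [window, aVecs]
  rw [if_pos (by omega), if_pos hj]
  exact getD_eq_of_fillsS hp hj

theorem distLE_through_setA (hk : 6 ≤ k) (hd : 0 < d) (hno : IsNoInstance k d S)
    (hone : ones d ∈ S) (hβ : SuffixTarget S qb β) (hα : α ∈ setL k d S c ∨ α ∈ setL' k d S c)
    (hc : 4 ≤ c) (hck : c ≤ k - 1) : DistLE (Adj k d S) α β k := by
  obtain ⟨γ, hγ, hadj⟩ := exists_adj_mem_setA hd hα hc hck
  exact (DistLE.cons hadj (distLE_of_mem_setA (by omega) hno hone hβ hγ (n := k - 6)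
    (by omega) (by omega))).mono (by omega)

theorem distLE_through_uu (hk : 6 ≤ k) (hd : 0 < d) (hno : IsNoInstance k d S)
    (hone : ones d ∈ S) (hβ : SuffixTarget S qb β)
    (hα : α ∈ setL k d S k ∨ α ∈ setL k d S (k + 1)) : DistLE (Adj k d S) α β k := by
  have hqa : ∀ j : Fin k, ones d ∈ S := fun _ => hone
  have hL' := window_mem_setL' hqa hβ.1 (c := 4) (by omega) (by omega) fun _ => ⟨0, hd⟩
  exact (DistLE.cons (adj_of_fixedE (Or.inr (Or.inr (Or.inl ⟨hα, rfl⟩))))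
    (.cons (adj_of_fixedE (Or.inr (Or.inr (Or.inr ⟨rfl, hL'⟩))))
      (distLE_L'_window_target (by omega) hno hβ hqa (by omega) (by omega) (n := k - 6)
        (by omega) (by omega) _))).mono (by omega)

theorem distLE_of_mem_setL_one (hk : 5 ≤ k) (hno : IsNoInstance k d S) (hone : ones d ∈ S)
    (hβ : SuffixTarget S qb β) (hα : α ∈ setL k d S 1) : DistLE (Adj k d S) α β k := by
  obtain ⟨p, x, rfl, h⟩ := hα
  obtain ⟨hp, hz⟩ : FillsS k d S (fun j => j < k - 1) p ∧ ZeroX k d x := by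
    rcases h with ⟨-, h⟩ | ⟨h, -⟩ | ⟨h, -⟩
    · exact h
    · omega
    · omega
  have hqa := aVecs_mem hone hp 2
  obtain ⟨x', hx'⟩ := exists_goodCoords hno hqa hβ.1
  have hγ := window_mem_setL hqa hβ.1 hx' le_rfl (by omega)
  refine (DistLE.cons (adj_of_swapE (Or.inr (Or.inl ⟨p, x, _, x', rfl, rfl,
    ⟨p, x, rfl, Or.inl ⟨rfl, hp, hz⟩⟩, hγ, fun j hj => ?_⟩)))
    (distLE_L_window_target hk hβ hqa hx' le_rfl (by omega) (n := k - 4) (by omega)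
      (by omega))).mono (by omega)
  have := j.isLt
  simp only [window, aVecs]
  split_ifs
  · exact getD_eq_of_fillsS hp (by omega)
  · omega
  · exact ((hp j).2 (by omega)).symm

theorem distLE_of_mem_setL_of_le_four (hk : 5 ≤ k) (hno : IsNoInstance k d S)
    (hone : ones d ∈ S) (hβ : SuffixTarget S qb β) (hα : α ∈ setL k d S c) (hc : 2 ≤ c)
    (hc4 : c ≤ 4) : DistLE (Adj k d S) α β k := by
  obtain ⟨γ, hγ, hαγ⟩ := exists_mem_setL_distLE hone hα hc (by omega) (c' := 3) (n := 1)
    (by omega) (by omega) (by omega) (by omega)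
  exact (hαγ.trans (distLE_of_mem_setL_three hk hno hone hβ hγ)).mono (by omega)

theorem distLE_of_mem_setL_of_eq_five (hk : k = 5) (hone : ones d ∈ S)
    (hβ : SuffixTarget S qb β) (hα : α ∈ setL k d S c) (hc : 2 ≤ c) (hck : c ≤ k) :
    DistLE (Adj k d S) α β (k - 1) := by
  obtain ⟨γ, hγ, hαγ⟩ := exists_mem_setL_distLE hone hα hc hck (c' := 3) (n := 2)
    (by omega) (by omega) (by omega) (by omega)
  exact (hαγ.trans (distLE_of_mem_setL_three_of_eq_five hk hone hβ hγ)).mono (by omega)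

theorem distLE_of_mem_setL (hk : 5 ≤ k) (hd : 0 < d) (hno : IsNoInstance k d S)
    (hone : ones d ∈ S) (hβ : SuffixTarget S qb β) (hα : α ∈ setL k d S c) :
    DistLE (Adj k d S) α β k := by
  have hc : c = 1 ∨ c = k + 1 ∨ 2 ≤ c ∧ c ≤ k := by
    obtain ⟨_, _, _, ⟨h, -⟩ | ⟨h, -⟩ | ⟨h, h', -⟩⟩ := hα <;> omega
  rcases hc with rfl | rfl | ⟨hc, hck⟩
  · exact distLE_of_mem_setL_one hk hno hone hβ hα
  · by_cases hk5 : k = 5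
    · obtain ⟨γ, hγ, hαγ⟩ := exists_adj_mem_setL_of_mem_setL_succ hno hone (by omega) hα
      exact (DistLE.cons hαγ (distLE_of_mem_setL_of_eq_five hk5 hone hβ hγ (by omega)
        le_rfl)).mono (by omega)
    · exact distLE_through_uu (by omega) hd hno hone hβ (Or.inr hα)
  by_cases hc4 : c ≤ 4
  · exact distLE_of_mem_setL_of_le_four hk hno hone hβ hα hc hc4
  by_cases hk5 : k = 5
  · exact (distLE_of_mem_setL_of_eq_five hk5 hone hβ hα hc hck).mono (by omega)
  by_cases hck' : c = k
  · subst hck'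
    exact distLE_through_uu (by omega) hd hno hone hβ (Or.inl hα)
  · exact distLE_through_setA (by omega) hd hno hone hβ (Or.inl hα) (by omega) (by omega)

theorem distLE_of_mem_setL' (hk : 5 ≤ k) (hd : 0 < d) (hno : IsNoInstance k d S)
    (hone : ones d ∈ S) (hβ : SuffixTarget S qb β) (hα : α ∈ setL' k d S c) :
    DistLE (Adj k d S) α β k := by
  have ⟨_, _, _, hc, hck, _⟩ := hα
  obtain ⟨γ, hγ, hαγ⟩ := exists_adj_mem_setL_of_mem_setL' hno hone hα
  by_cases hc3 : c = 3
  · subst hc3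
    exact (DistLE.cons hαγ (distLE_of_mem_setL_three hk hno hone hβ hγ)).mono (by omega)
  by_cases hk5 : k = 5
  · exact (DistLE.cons hαγ (distLE_of_mem_setL_of_eq_five hk5 hone hβ hγ (by omega)
      (by omega))).mono (by omega)
  exact distLE_through_setA (by omega) hd hno hone hβ (Or.inr hα) (by omega) hck

theorem distLE_of_mem_setB (hk : 5 ≤ k) (hd : 0 < d) (hno : IsNoInstance k d S)
    (hone : ones d ∈ S) (hβ : SuffixTarget S qb β) (hα : α ∈ setB k d S c) :
    DistLE (Adj k d S) α β k := by
  have ⟨p, x, hαp, hc, hck, hp, _⟩ := hα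
  by_cases hc3 : c = 3
  · subst hc3 hαp
    have hqa : ∀ j : Fin k, ones d ∈ S := fun _ => hone
    obtain ⟨x', hx'⟩ := exists_goodCoords hno hqa hβ.1
    have hL := window_mem_setL hqa hβ.1 hx' (c := 3) (by omega) (by omega)
    have hL' := window_mem_setL' hqa (bVecs_mem hone hp 3) le_rfl (by omega) x'
    refine (DistLE.cons (adj_of_bBack (Or.inl ⟨3, _, p, x, _, x', hα, Or.inr hL', rfl, rfl,
      fun j hj => ?_⟩)) (.cons (adj_of_vecE_symm ⟨3, _, x', _, x', le_rfl, by omega, rfl, rfl,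
        hL, hL', rfl, Or.inr (window_three_congr (by omega) _ _ _)⟩)
      (distLE_L_window_target hk hβ hqa hx' (by omega) (by omega) (n := k - 5) (by omega)
        (by omega)))).mono (by omega)
    simp only [window, bVecs]
    rw [if_neg (by omega), if_pos hj, if_pos hj]
    exact (getD_eq_of_fillsS hp hj).symm
  · have hγ := truncate_mem_setA (k := k) (p := fun _ => some (ones d)) hd (fun _ _ => ⟨_, hone, rfl⟩)
      (c := c) (by omega) (by omega)
    exact (DistLE.cons (adj_of_baBack ⟨c, by omega, hck, hα, hγ⟩)
      (distLE_of_mem_setA hk hno hone hβ hγ (n := k - 6) (by omega) (by omega))).mono (by omega)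

end Target

/-- **Section 4.2, Case 4.**  Assume `S` is a NO instance of `k`-OV:
every `k` vectors of `S` (repetitions allowed) have a common coordinate at which they
all equal `1`.  Then for every vertex `α ∈ V \ {u,v}` and every vertex `β ∈ B`, we
have `d(α,β) ≤ k`. -/
theorem case4_no_instance (k d : ℕ) (hk : 5 ≤ k) (hd : 1 ≤ d)
    (S : Finset (Vec d)) (hone : ones d ∈ S)
    (hno : ∀ f : Fin k → Vec d, (∀ j, f j ∈ S) → ∃ x : Fin d, ∀ j, f j x = true)
    (α : Vert k d) (hα : α ∈ VertexSet k d S) (hαu : α ≠ Vert.uu) (hαv : α ≠ Vert.vv)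
    (β : Vert k d) (hβ : β ∈ setBall k d S) :
    DistLE (Adj k d S) α β k := by
  obtain ⟨qb, hβ⟩ := exists_suffixTarget_of_mem_setBall hk hone hβ
  simp only [VertexSet, setLall, setL'all, setAall, setBall, Set.mem_union, Set.mem_iUnion,
    Set.mem_insert_iff, Set.mem_singleton_iff] at hα
  rcases hα with (((⟨c, hα⟩ | ⟨c, hα⟩) | ⟨c, hα⟩) | ⟨c, hα⟩) | rfl | rfl
  · exact distLE_of_mem_setL hk hd hno hone hβ hα
  · exact distLE_of_mem_setL' hk hd hno hone hβ hα
  · exact (distLE_of_mem_setA hk hno hone hβ hα (n := k - 4) (by omega) (by omega)).mono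
      (by omega)
  · exact distLE_of_mem_setB hk hd hno hone hβ hα
  · exact absurd rfl hαu
  · exact absurd rfl hαv

end DiamLB
end

section
/- (Section 4.2, Case 5) Assume S is a NO instance of k-OV: every k vectors v_1,…,v_k ∈ S (repetitions allowed) have a common coordinate x ∈ [d] with v_1[x] = ⋯ = v_k[x] = 1. Then for every vertex α ∈ B and every vertex β ∈ V \ {u,v}, we have d(α,β) ≤ k. -/
namespace DiamLB

/-! ## Auxiliary infrastructure for the proof -/

section Aux

theorem hwl_trans {V : Type*} {A : V → V → Prop} :
    ∀ (m : ℕ) {n : ℕ} {a b c : V}, HasWalkLen A m a b → HasWalkLen A n b c →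
      HasWalkLen A (m + n) a c
  | 0, n, a, b, c, hab, hbc => by
    have h : a = b := hab
    rw [Nat.zero_add]; exact h ▸ hbc
  | m + 1, n, a, b, c, hab, hbc => by
    obtain ⟨w, h1, h2⟩ := hab
    rw [Nat.succ_add]
    exact ⟨w, h1, hwl_trans m h2 hbc⟩

theorem hwl_one {V : Type*} {A : V → V → Prop} {a b : V} (h : A a b) :
    HasWalkLen A 1 a b := ⟨b, h, rfl⟩

theorem hwl_snoc {V : Type*} {A : V → V → Prop} {n : ℕ} {a b c : V}
    (h : HasWalkLen A n a b) (h2 : A b c) : HasWalkLen A (n + 1) a c :=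
  hwl_trans n h (hwl_one h2)

/-- The generic partial tuple used along climbing paths: at level `j`, positions
`< k - j` hold `h t` if `t < k - m` and `ones` otherwise; positions `≥ k - j + 2`
hold `h t` if `t ≥ k - m + 2` and `ones` otherwise. -/
def ppv (k d m : ℕ) (h : Fin k → Vec d) (j : ℕ) : Fin k → Option (Vec d) :=
  fun t => if (t : ℕ) < k - j then some (if (t : ℕ) < k - m then h t else ones d)
    else if k - j + 2 ≤ (t : ℕ) then some (if k - m + 2 ≤ (t : ℕ) then h t else ones d)
    else none

lemma ppv_some {k d m j : ℕ} {h : Fin k → Vec d} {t : Fin k} {w : Vec d}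
    (hw : ppv k d m h j t = some w) : w = h t ∨ w = ones d := by
  unfold ppv at hw
  split_ifs at hw <;> simp_all

variable {k d : ℕ} {S : Finset (Vec d)}

lemma ppv_fills (hone : ones d ∈ S) {h : Fin k → Vec d} (hS : ∀ t, h t ∈ S)
    (m j : ℕ) :
    FillsS k d S (fun t => t < k - j ∨ k - j + 2 ≤ t) (ppv k d m h j) := by
  intro t
  constructor
  · intro hc
    unfold ppv
    by_cases h1 : (t : ℕ) < k - j
    · rw [if_pos h1]
      exact ⟨_, by split <;> [exact hS t; exact hone], rfl⟩
    · have h2 : k - j + 2 ≤ (t : ℕ) := by rcases hc with hc | hc <;> omega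
      rw [if_neg h1, if_pos h2]
      exact ⟨_, by split <;> [exact hS t; exact hone], rfl⟩
  · intro hc
    unfold ppv
    rw [if_neg (by omega), if_neg (by omega)]

lemma vL_memL (hone : ones d ∈ S) {h : Fin k → Vec d} {x : Fin (k - 1) → Fin d}
    (hS : ∀ t, h t ∈ S) (hx : ∀ (t : Fin k) (ℓ : Fin (k - 1)), h t (x ℓ) = true)
    {j : ℕ} (h2 : 2 ≤ j) (hjk : j ≤ k) (m : ℕ) :
    Vert.node (Tag.L j) (ppv k d m h j) x ∈ setL k d S j := by
  refine ⟨_, _, rfl, Or.inr (Or.inr ⟨h2, hjk, ppv_fills hone hS m j, ?_, ?_⟩)⟩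
  · intro t _ w hw ℓ _
    rcases ppv_some hw with rfl | rfl
    · exact hx t ℓ
    · rfl
  · intro t _ w hw ℓ _
    rcases ppv_some hw with rfl | rfl
    · exact hx t ℓ
    · rfl

lemma vL'_mem (hone : ones d ∈ S) {h : Fin k → Vec d} {x : Fin (k - 1) → Fin d}
    (hS : ∀ t, h t ∈ S)
    {j : ℕ} (h3 : 3 ≤ j) (hjk : j ≤ k - 1) (m : ℕ) :
    Vert.node (Tag.L' j) (ppv k d m h j) x ∈ setL' k d S j :=
  ⟨_, _, rfl, h3, hjk, ppv_fills hone hS m j⟩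

lemma ppv_succ_eq {m j : ℕ} {h : Fin k → Vec d} (hjk : j + 1 ≤ k) {t : Fin k}
    (ht1 : (t : ℕ) ≠ k - j - 1) (ht2 : (t : ℕ) ≠ k - j + 1) :
    ppv k d m h (j + 1) t = ppv k d m h j t := by
  unfold ppv
  have := t.isLt
  split_ifs <;> first | rfl | (exfalso; omega)

lemma swapE_step (hone : ones d ∈ S) {h : Fin k → Vec d} {x : Fin (k - 1) → Fin d}
    (hS : ∀ t, h t ∈ S) (hx : ∀ (t : Fin k) (ℓ : Fin (k - 1)), h t (x ℓ) = true)
    {j : ℕ} (h2 : 2 ≤ j) (hjk : j + 1 ≤ k) (m : ℕ) :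
    SwapE k d S (Vert.node (Tag.L j) (ppv k d m h j) x)
      (Vert.node (Tag.L (j + 1)) (ppv k d m h (j + 1)) x) := by
  refine Or.inl ⟨j, _, x, _, x, h2, by omega, rfl, rfl,
    vL_memL hone hS hx h2 (by omega) m, vL_memL hone hS hx (by omega) hjk m, rfl, ?_⟩
  intro t ht1 ht2
  exact ppv_succ_eq hjk ht1 ht2

lemma walk_up (hone : ones d ∈ S) {h : Fin k → Vec d} {x : Fin (k - 1) → Fin d}
    (hS : ∀ t, h t ∈ S) (hx : ∀ (t : Fin k) (ℓ : Fin (k - 1)), h t (x ℓ) = true)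
    (m : ℕ) :
    ∀ (n j : ℕ), 2 ≤ j → j + n ≤ k →
      HasWalkLen (Adj k d S) n (Vert.node (Tag.L j) (ppv k d m h j) x)
        (Vert.node (Tag.L (j + n)) (ppv k d m h (j + n)) x)
  | 0, j, _, _ => rfl
  | n + 1, j, h2, hk2 => by
    have hw := walk_up hone hS hx m n (j + 1) (by omega) (by omega)
    rw [show j + (n + 1) = j + 1 + n by omega]
    exact ⟨_, Or.inl (swapE_step hone hS hx h2 (by omega) m), hw⟩

lemma walk_down (hone : ones d ∈ S) {h : Fin k → Vec d} {x : Fin (k - 1) → Fin d}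
    (hS : ∀ t, h t ∈ S) (hx : ∀ (t : Fin k) (ℓ : Fin (k - 1)), h t (x ℓ) = true)
    (m : ℕ) :
    ∀ (n j : ℕ), 2 ≤ j → j + n ≤ k →
      HasWalkLen (Adj k d S) n (Vert.node (Tag.L (j + n)) (ppv k d m h (j + n)) x)
        (Vert.node (Tag.L j) (ppv k d m h j) x)
  | 0, j, _, _ => rfl
  | n + 1, j, h2, hk2 => by
    have hw := walk_down hone hS hx m n (j + 1) (by omega) (by omega)
    refine hwl_snoc (b := Vert.node (Tag.L (j + 1)) (ppv k d m h (j + 1)) x) ?_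
      (Or.inr (Or.inl (swapE_step hone hS hx h2 (by omega) m)))
    rw [show j + (n + 1) = j + 1 + n by omega]
    exact hw

/-- Walk between two levels of the canonical climbing family. -/
lemma walk_to (hone : ones d ∈ S) {h : Fin k → Vec d} {x : Fin (k - 1) → Fin d}
    (hS : ∀ t, h t ∈ S) (hx : ∀ (t : Fin k) (ℓ : Fin (k - 1)), h t (x ℓ) = true)
    (m : ℕ) {s m' : ℕ} (hs : 2 ≤ s) (hm : 2 ≤ m') (hsk : s ≤ k) (hmk : m' ≤ k) :
    ∃ n, n ≤ (m' - s) + (s - m') ∧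
      HasWalkLen (Adj k d S) n (Vert.node (Tag.L s) (ppv k d m h s) x)
        (Vert.node (Tag.L m') (ppv k d m h m') x) := by
  rcases Nat.le_total s m' with hle | hle
  · refine ⟨m' - s, by omega, ?_⟩
    have := walk_up hone hS hx m (m' - s) s hs (by omega)
    rwa [show s + (m' - s) = m' by omega] at this
  · refine ⟨s - m', by omega, ?_⟩
    have := walk_down hone hS hx m (s - m') m' hm (by omega)
    rwa [show m' + (s - m') = s by omega] at this

lemma fills_getD_mem (hone : ones d ∈ S) {F : ℕ → Prop} {p : Fin k → Option (Vec d)}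
    (hf : FillsS k d S F p) : ∀ t, ((p t).getD (ones d)) ∈ S := by
  intro t
  by_cases hF : F (t : ℕ)
  · obtain ⟨a, ha, he⟩ := (hf t).1 hF
    simpa [he] using ha
  · simp [(hf t).2 hF, hone]

lemma fills_eq_ppv {m : ℕ} {p : Fin k → Option (Vec d)}
    (hf : FillsS k d S (fun t => t < k - m ∨ k - m + 2 ≤ t) p) :
    ppv k d m (fun t => (p t).getD (ones d)) m = p := by
  funext t
  unfold ppv
  by_cases c1 : (t : ℕ) < k - m
  · obtain ⟨a, _, he⟩ := (hf t).1 (Or.inl c1)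
    simp [c1, he]
  · by_cases c2 : k - m + 2 ≤ (t : ℕ)
    · obtain ⟨a, _, he⟩ := (hf t).1 (Or.inr c2)
      simp [c1, c2, he]
    · rw [if_neg c1, if_neg c2, ((hf t).2 (by push_neg; omega)).symm]

end Aux
section Master

variable {k d : ℕ} {S : Finset (Vec d)}

lemma tagLL' (i i' : ℕ) (p p' : Fin k → Option (Vec d)) (x x' : Fin (k - 1) → Fin d) :
    Vert.node (Tag.L i) p x ≠ Vert.node (Tag.L' i') p' x' := by
  intro h
  injection h with h1 _ _
  exact Tag.noConfusion h1

lemma tagL'L (i i' : ℕ) (p p' : Fin k → Option (Vec d)) (x x' : Fin (k - 1) → Fin d) :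
    Vert.node (Tag.L' i) p x ≠ Vert.node (Tag.L i') p' x' := by
  intro h
  injection h with h1 _ _
  exact Tag.noConfusion h1

/-- Route to a target in `L_i`. -/
lemma master_L (hk : 5 ≤ k) (hone : ones d ∈ S)
    (hno : ∀ f : Fin k → Vec d, (∀ j, f j ∈ S) → ∃ x : Fin d, ∀ j, f j x = true)
    {α : Vert k d} {s c : ℕ} (hs3 : 3 ≤ s) (hsk : s + 2 ≤ k) (hcs : c + 1 ≤ s)
    (hcsk : c + s ≤ k + 1)
    (hub : ∀ (m : ℕ) (h : Fin k → Vec d) (x : Fin (k - 1) → Fin d),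
      (∀ t, h t ∈ S) → (∀ (t : Fin k) (ℓ : Fin (k - 1)), h t (x ℓ) = true) →
      DistLE (Adj k d S) α (Vert.node (Tag.L s) (ppv k d m h s) x) c)
    {β : Vert k d} {i : ℕ} (hβ : β ∈ setL k d S i) :
    DistLE (Adj k d S) α β k := by
  obtain ⟨p, x, rfl, hcase⟩ := hβ
  have hβm : Vert.node (Tag.L i) p x ∈ setL k d S i := ⟨p, x, rfl, hcase⟩
  rcases hcase with ⟨hi1, hfillsβ, -⟩ | ⟨hik1, hfillsβ, -⟩ | ⟨hi2, hik, hfillsβ, hbit⟩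
  · -- i = 1
    subst hi1
    set h : Fin k → Vec d := fun t => (p t).getD (ones d) with hh
    have hS : ∀ t, h t ∈ S := fills_getD_mem hone hfillsβ
    obtain ⟨x0, hx0⟩ := hno h hS
    set xs : Fin (k - 1) → Fin d := fun _ => x0 with hxs
    have hx : ∀ (t : Fin k) (ℓ : Fin (k - 1)), h t (xs ℓ) = true := fun t _ => hx0 t
    obtain ⟨n0, hn0, w0⟩ := hub 2 h xs hS hx
    obtain ⟨n1, hn1, w1⟩ := walk_to (s := s) (m' := 2) hone hS hx 2 (by omega) (by omega) (by omega) (by omega)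
    have memL2 : Vert.node (Tag.L 2) (ppv k d 2 h 2) xs ∈ setL k d S 2 :=
      vL_memL hone hS hx (by omega) (by omega) 2
    have hedge : Adj k d S (Vert.node (Tag.L 2) (ppv k d 2 h 2) xs)
        (Vert.node (Tag.L 1) p x) := by
      refine Or.inr (Or.inl (Or.inr (Or.inl ⟨p, x, ppv k d 2 h 2, xs, rfl, rfl, hβm,
        memL2, ?_⟩)))
      intro t ht
      have htlt := t.isLt
      by_cases c1 : (t : ℕ) < k - 2
      · obtain ⟨a, -, he⟩ := (hfillsβ t).1 (by omega)
        unfold ppv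
        rw [if_pos c1, if_pos c1, he, hh]
        simp [he, c1]
      · have hpn := (hfillsβ t).2 (by omega)
        unfold ppv
        rw [if_neg c1, if_neg (by omega), hpn]
    exact ⟨n0 + n1 + 1, by omega, hwl_snoc (hwl_trans n0 w0 w1) hedge⟩
  · -- i = k + 1
    subst hik1
    set h : Fin k → Vec d := fun t => (p t).getD (ones d) with hh
    have hS : ∀ t, h t ∈ S := fills_getD_mem hone hfillsβ
    obtain ⟨x0, hx0⟩ := hno h hS
    set xs : Fin (k - 1) → Fin d := fun _ => x0 with hxs
    have hx : ∀ (t : Fin k) (ℓ : Fin (k - 1)), h t (xs ℓ) = true := fun t _ => hx0 t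
    obtain ⟨n0, hn0, w0⟩ := hub k h xs hS hx
    obtain ⟨n1, hn1, w1⟩ := walk_to (s := s) (m' := k) hone hS hx k (by omega) (by omega) (by omega) (by omega)
    have memLk : Vert.node (Tag.L k) (ppv k d k h k) xs ∈ setL k d S k :=
      vL_memL hone hS hx (by omega) (le_refl k) k
    have hedge : Adj k d S (Vert.node (Tag.L k) (ppv k d k h k) xs)
        (Vert.node (Tag.L (k + 1)) p x) := by
      refine Or.inr (Or.inl (Or.inr (Or.inr ⟨p, x, ppv k d k h k, xs, rfl, rfl, hβm,
        memLk, ?_⟩)))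
      intro t ht
      have htlt := t.isLt
      by_cases c2 : 2 ≤ (t : ℕ)
      · obtain ⟨a, -, he⟩ := (hfillsβ t).1 (by omega)
        unfold ppv
        rw [if_neg (by omega), if_pos (by omega), he, hh]
        simp [he, c2, show k - k + 2 ≤ (t : ℕ) by omega]
      · have hpn := (hfillsβ t).2 (by omega)
        unfold ppv
        rw [if_neg (by omega), if_neg (by omega), hpn]
    exact ⟨n0 + n1 + 1, by omega, hwl_snoc (hwl_trans n0 w0 w1) hedge⟩
  · -- 2 ≤ i ≤ k
    set h : Fin k → Vec d := fun t => (p t).getD (ones d) with hh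
    have hS : ∀ t, h t ∈ S := fills_getD_mem hone hfillsβ
    have hpp : ppv k d i h i = p := fills_eq_ppv hfillsβ
    obtain ⟨x0, hx0⟩ := hno h hS
    set xs : Fin (k - 1) → Fin d := fun _ => x0 with hxs
    have hx : ∀ (t : Fin k) (ℓ : Fin (k - 1)), h t (xs ℓ) = true := fun t _ => hx0 t
    obtain ⟨n0, hn0, w0⟩ := hub i h xs hS hx
    obtain ⟨n1, hn1, w1⟩ := walk_to (s := s) (m' := i) hone hS hx i (by omega) hi2 (by omega) hik
    rw [hpp] at w1
    have memLi : Vert.node (Tag.L i) p xs ∈ setL k d S i := by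
      rw [← hpp]; exact vL_memL hone hS hx hi2 hik i
    by_cases hmid : 3 ≤ i ∧ i ≤ k - 1
    · -- detour through L'_i
      have memL'i : Vert.node (Tag.L' i) p xs ∈ setL' k d S i :=
        ⟨p, xs, rfl, hmid.1, hmid.2, hfillsβ⟩
      have hedge1 : Adj k d S (Vert.node (Tag.L i) p xs) (Vert.node (Tag.L' i) p xs) :=
        Or.inr (Or.inr (Or.inl ⟨i, p, xs, p, xs, hmid.1, hmid.2, rfl, rfl, memLi,
          memL'i, rfl, Or.inl fun j _ => rfl⟩))
      have hedge2 : Adj k d S (Vert.node (Tag.L' i) p xs) (Vert.node (Tag.L i) p x) :=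
        Or.inr (Or.inr (Or.inr (Or.inr (Or.inl ⟨Tag.L' i, Tag.L i, p, xs, x, rfl, rfl,
          tagL'L i i p p xs x, Or.inr (Or.inl ⟨i, memL'i, hβm⟩)⟩))))
      exact ⟨n0 + n1 + 2, by omega,
        hwl_trans n0 w0 (hwl_snoc (hwl_snoc w1 hedge1) hedge2)⟩
    · -- i = 2 or i = k
      by_cases hEq : Vert.node (Tag.L i) p xs = Vert.node (Tag.L i) p x
      · rw [hEq] at w1
        exact ⟨n0 + n1, by omega, hwl_trans n0 w0 w1⟩
      · have hedge : Adj k d S (Vert.node (Tag.L i) p xs) (Vert.node (Tag.L i) p x) := by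
          rcases (by omega : i = 2 ∨ i = k) with h2 | h2
          · refine Or.inr (Or.inr (Or.inr (Or.inr (Or.inl ⟨Tag.L i, Tag.L i, p, xs, x,
              rfl, rfl, hEq, Or.inr (Or.inr (Or.inr (Or.inl ⟨?_, ?_⟩)))⟩))))
            · exact h2 ▸ memLi
            · exact h2 ▸ hβm
          · refine Or.inr (Or.inr (Or.inr (Or.inr (Or.inl ⟨Tag.L i, Tag.L i, p, xs, x,
              rfl, rfl, hEq, Or.inr (Or.inr (Or.inr (Or.inr ⟨?_, ?_⟩)))⟩))))
            · exact h2 ▸ memLi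
            · exact h2 ▸ hβm
        exact ⟨n0 + n1 + 1, by omega, hwl_trans n0 w0 (hwl_snoc w1 hedge)⟩

end Master
section Master2

variable {k d : ℕ} {S : Finset (Vec d)}

/-- Route to a target in `L'_i`. -/
lemma master_L' (hk : 5 ≤ k) (hone : ones d ∈ S)
    (hno : ∀ f : Fin k → Vec d, (∀ j, f j ∈ S) → ∃ x : Fin d, ∀ j, f j x = true)
    {α : Vert k d} {s c : ℕ} (hs3 : 3 ≤ s) (hsk : s + 2 ≤ k) (hcs : c + 1 ≤ s)
    (hcsk : c + s ≤ k + 1)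
    (hub : ∀ (m : ℕ) (h : Fin k → Vec d) (x : Fin (k - 1) → Fin d),
      (∀ t, h t ∈ S) → (∀ (t : Fin k) (ℓ : Fin (k - 1)), h t (x ℓ) = true) →
      DistLE (Adj k d S) α (Vert.node (Tag.L s) (ppv k d m h s) x) c)
    {β : Vert k d} {i : ℕ} (hβ : β ∈ setL' k d S i) :
    DistLE (Adj k d S) α β k := by
  obtain ⟨p, x, rfl, hi3, hik, hfillsβ⟩ := hβ
  have hβm : Vert.node (Tag.L' i) p x ∈ setL' k d S i := ⟨p, x, rfl, hi3, hik, hfillsβ⟩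
  set h : Fin k → Vec d := fun t => (p t).getD (ones d) with hh
  have hS : ∀ t, h t ∈ S := fills_getD_mem hone hfillsβ
  have hpp : ppv k d i h i = p := fills_eq_ppv hfillsβ
  obtain ⟨x0, hx0⟩ := hno h hS
  set xs : Fin (k - 1) → Fin d := fun _ => x0 with hxs
  have hx : ∀ (t : Fin k) (ℓ : Fin (k - 1)), h t (xs ℓ) = true := fun t _ => hx0 t
  obtain ⟨n0, hn0, w0⟩ := hub i h xs hS hx
  obtain ⟨n1, hn1, w1⟩ := walk_to (s := s) (m' := i) hone hS hx i (by omega) (by omega)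
    (by omega) (by omega)
  rw [hpp] at w1
  have memLi : Vert.node (Tag.L i) p xs ∈ setL k d S i := by
    rw [← hpp]; exact vL_memL hone hS hx (by omega) (by omega) i
  have hedge : Adj k d S (Vert.node (Tag.L i) p xs) (Vert.node (Tag.L' i) p x) :=
    Or.inr (Or.inr (Or.inr (Or.inr (Or.inl ⟨Tag.L i, Tag.L' i, p, xs, x, rfl, rfl,
      tagLL' i i p p xs x, Or.inr (Or.inr (Or.inl ⟨i, memLi, hβm⟩))⟩))))
  exact ⟨n0 + n1 + 1, by omega, hwl_trans n0 w0 (hwl_snoc w1 hedge)⟩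

/-- Route to a target in `A_i`. -/
lemma master_A (hk : 5 ≤ k) (hd : 1 ≤ d) (hone : ones d ∈ S)
    (hno : ∀ f : Fin k → Vec d, (∀ j, f j ∈ S) → ∃ x : Fin d, ∀ j, f j x = true)
    {α : Vert k d} {s c : ℕ} (hs3 : 3 ≤ s) (hsk : s + 2 ≤ k) (hcs : c + 1 ≤ s)
    (hcsk : c + s ≤ k + 1)
    (hub : ∀ (m : ℕ) (h : Fin k → Vec d) (x : Fin (k - 1) → Fin d),
      (∀ t, h t ∈ S) → (∀ (t : Fin k) (ℓ : Fin (k - 1)), h t (x ℓ) = true) →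
      DistLE (Adj k d S) α (Vert.node (Tag.L s) (ppv k d m h s) x) c)
    {β : Vert k d} {i : ℕ} (hβ : β ∈ setA k d S i) :
    DistLE (Adj k d S) α β k := by
  obtain ⟨p, x, rfl, hi4, hik, hfillsβ, hzx⟩ := hβ
  have hβm : Vert.node (Tag.A i) p x ∈ setA k d S i := ⟨p, x, rfl, hi4, hik, hfillsβ, hzx⟩
  set h : Fin k → Vec d := fun t => (p t).getD (ones d) with hh
  have hS : ∀ t, h t ∈ S := fills_getD_mem hone hfillsβ
  obtain ⟨x0, hx0⟩ := hno h hS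
  set xs : Fin (k - 1) → Fin d := fun _ => x0 with hxs
  have hx : ∀ (t : Fin k) (ℓ : Fin (k - 1)), h t (xs ℓ) = true := fun t _ => hx0 t
  obtain ⟨n0, hn0, w0⟩ := hub (k - 1) h xs hS hx
  obtain ⟨n1, hn1, w1⟩ := walk_to (s := s) (m' := k - 1) hone hS hx (k - 1) (by omega)
    (by omega) (by omega) (by omega)
  -- the intermediate vertex in `A_{k-1}`
  set pA : Fin k → Option (Vec d) := fun t => if (t : ℕ) = 0 then p t else none with hpA
  set x9 : Fin (k - 1) → Fin d := fun _ => (⟨0, by omega⟩ : Fin d) with hx9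
  have hp0 : ∃ a ∈ S, p ⟨0, by omega⟩ = some a := (hfillsβ ⟨0, by omega⟩).1 (by
    simp only []; omega)
  have memA : Vert.node (Tag.A (k - 1)) pA x9 ∈ setA k d S (k - 1) := by
    refine ⟨pA, x9, rfl, by omega, le_refl _, ?_, fun ℓ => rfl⟩
    intro t
    constructor
    · intro hc
      have ht0 : (t : ℕ) = 0 := by omega
      obtain ⟨a, ha, he⟩ := (hfillsβ t).1 (by omega)
      exact ⟨a, ha, by rw [hpA]; simp only [ht0, if_pos]; exact he⟩
    · intro hc
      rw [hpA]
      have : ¬ (t : ℕ) = 0 := by omega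
      simp [this]
  have hedge1 : Adj k d S (Vert.node (Tag.L (k - 1)) (ppv k d (k - 1) h (k - 1)) xs)
      (Vert.node (Tag.A (k - 1)) pA x9) := by
    refine Or.inr (Or.inr (Or.inr (Or.inr (Or.inr (Or.inl (Or.inl
      ⟨k - 1, Tag.L (k - 1), ppv k d (k - 1) h (k - 1), xs, pA, x9,
        Or.inl (vL_memL hone hS hx (by omega) (by omega) (k - 1)), memA, rfl, rfl,
        ?_⟩))))))
    intro j hj
    have hj0 : (j : ℕ) = 0 := by omega
    obtain ⟨a, ha, he⟩ := (hfillsβ j).1 (by omega)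
    rw [hpA]
    simp only [hj0, if_pos]
    unfold ppv
    rw [if_pos (by omega), if_pos (by omega), he, hh]
    simp [he]
  have hedge2 : Adj k d S (Vert.node (Tag.A (k - 1)) pA x9) (Vert.node (Tag.A i) p x) := by
    refine Or.inr (Or.inr (Or.inr (Or.inr (Or.inr (Or.inl (Or.inr (Or.inr
      ⟨i, pA, x9, p, x, memA, hβm, rfl, rfl, ?_⟩)))))))
    intro j hj
    rw [hpA]
    simp only [hj, if_pos]
  exact ⟨n0 + n1 + 2, by omega, hwl_trans n0 w0 (hwl_snoc (hwl_snoc w1 hedge1) hedge2)⟩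

/-- Route to a target in `B_i`. -/
lemma master_B (hk : 5 ≤ k) (hone : ones d ∈ S)
    (hno : ∀ f : Fin k → Vec d, (∀ j, f j ∈ S) → ∃ x : Fin d, ∀ j, f j x = true)
    {α : Vert k d} {s c : ℕ} (hs3 : 3 ≤ s) (hsk : s + 2 ≤ k) (hcs : c + 1 ≤ s)
    (hcsk : c + s ≤ k + 1)
    (hub : ∀ (m : ℕ) (h : Fin k → Vec d) (x : Fin (k - 1) → Fin d),
      (∀ t, h t ∈ S) → (∀ (t : Fin k) (ℓ : Fin (k - 1)), h t (x ℓ) = true) →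
      DistLE (Adj k d S) α (Vert.node (Tag.L s) (ppv k d m h s) x) c)
    {β : Vert k d} {i : ℕ} (hβ : β ∈ setB k d S i) :
    DistLE (Adj k d S) α β k := by
  obtain ⟨p, x, rfl, hi3, hik, hfillsβ, hzx⟩ := hβ
  have hβm : Vert.node (Tag.B i) p x ∈ setB k d S i := ⟨p, x, rfl, hi3, hik, hfillsβ, hzx⟩
  set h : Fin k → Vec d := fun t => (p t).getD (ones d) with hh
  have hS : ∀ t, h t ∈ S := fills_getD_mem hone hfillsβ
  obtain ⟨x0, hx0⟩ := hno h hS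
  set xs : Fin (k - 1) → Fin d := fun _ => x0 with hxs
  have hx : ∀ (t : Fin k) (ℓ : Fin (k - 1)), h t (xs ℓ) = true := fun t _ => hx0 t
  obtain ⟨n0, hn0, w0⟩ := hub i h xs hS hx
  obtain ⟨n1, hn1, w1⟩ := walk_to (s := s) (m' := k - 2) hone hS hx i (by omega)
    (by omega) (by omega) (by omega)
  have memLk2 : Vert.node (Tag.L (k - 2)) (ppv k d i h (k - 2)) xs ∈ setL k d S (k - 2) :=
    vL_memL hone hS hx (by omega) (by omega) i
  have memL'k2 : Vert.node (Tag.L' (k - 2)) (ppv k d i h (k - 2)) xs ∈ setL' k d S (k - 2) :=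
    vL'_mem hone hS (by omega) (by omega) i
  have hedge1 : Adj k d S (Vert.node (Tag.L (k - 2)) (ppv k d i h (k - 2)) xs)
      (Vert.node (Tag.L' (k - 2)) (ppv k d i h (k - 2)) xs) :=
    Or.inr (Or.inr (Or.inr (Or.inr (Or.inl ⟨Tag.L (k - 2), Tag.L' (k - 2), _, xs, xs,
      rfl, rfl, tagLL' _ _ _ _ _ _, Or.inr (Or.inr (Or.inl ⟨k - 2, memLk2, memL'k2⟩))⟩))))
  have hedge2 : Adj k d S (Vert.node (Tag.L' (k - 2)) (ppv k d i h (k - 2)) xs)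
      (Vert.node (Tag.B i) p x) := by
    refine Or.inr (Or.inr (Or.inr (Or.inr (Or.inr (Or.inr (Or.inl (Or.inr (Or.inl
      ⟨i, ppv k d i h (k - 2), xs, p, x, memL'k2, hβm, rfl, rfl, ?_⟩))))))))
    intro j hj
    have hjk := j.isLt
    obtain ⟨a, ha, he⟩ := (hfillsβ j).1 (by omega)
    rw [he]
    unfold ppv
    rw [if_neg (by omega), if_pos (by omega), if_pos (by omega), hh]
    simp [he]
  exact ⟨n0 + n1 + 2, by omega, hwl_trans n0 w0 (hwl_snoc (hwl_snoc w1 hedge1) hedge2)⟩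

end Master2
section Hubs

variable {k d : ℕ} {S : Finset (Vec d)}

/-- The hub for `α ∈ B_3`: any vertex of `L_3` of the canonical form is reachable
within `2` steps. -/
lemma hub3 (hk : 5 ≤ k) (hone : ones d ∈ S) {pα : Fin k → Option (Vec d)}
    {xα : Fin (k - 1) → Fin d}
    (memα : Vert.node (Tag.B 3) pα xα ∈ setB k d S 3)
    (hfillsα : FillsS k d S (fun j => k - 3 + 2 ≤ j) pα)
    (m : ℕ) (h : Fin k → Vec d) (x : Fin (k - 1) → Fin d)
    (hS : ∀ t, h t ∈ S) (hx : ∀ (t : Fin k) (ℓ : Fin (k - 1)), h t (x ℓ) = true) :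
    DistLE (Adj k d S) (Vert.node (Tag.B 3) pα xα)
      (Vert.node (Tag.L 3) (ppv k d m h 3) x) 2 := by
  set p1 : Fin k → Option (Vec d) :=
    fun t => if (t : ℕ) = k - 1 then pα t else ppv k d m h 3 t with hp1
  have memw1 : Vert.node (Tag.L' 3) p1 x ∈ setL' k d S 3 := by
    refine ⟨p1, x, rfl, le_refl 3, by omega, ?_⟩
    intro t
    have htk := t.isLt
    constructor
    · intro hc
      by_cases ht : (t : ℕ) = k - 1
      · obtain ⟨a, ha, he⟩ := (hfillsα t).1 (by omega)
        exact ⟨a, ha, by rw [hp1]; simp only [ht, if_pos]; exact he⟩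
      · obtain ⟨a, ha, he⟩ := ((ppv_fills hone hS m 3) t).1 hc
        exact ⟨a, ha, by simp only [hp1]; rw [if_neg ht]; exact he⟩
    · intro hc
      have ht : ¬ (t : ℕ) = k - 1 := by omega
      simp only [hp1]
      rw [if_neg ht]
      exact ((ppv_fills hone hS m 3) t).2 hc
  have memw2 : Vert.node (Tag.L 3) (ppv k d m h 3) x ∈ setL k d S 3 :=
    vL_memL hone hS hx (by omega) (by omega) m
  have hedge1 : Adj k d S (Vert.node (Tag.B 3) pα xα) (Vert.node (Tag.L' 3) p1 x) := by
    refine Or.inr (Or.inr (Or.inr (Or.inr (Or.inr (Or.inr (Or.inl (Or.inl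
      ⟨3, Tag.L' 3, pα, xα, p1, x, memα, Or.inr memw1, rfl, rfl, ?_⟩)))))))
    intro j hj
    have hjk := j.isLt
    have hj1 : (j : ℕ) = k - 1 := by omega
    simp only [hp1, hj1, if_pos]
  have hedge2 : Adj k d S (Vert.node (Tag.L' 3) p1 x)
      (Vert.node (Tag.L 3) (ppv k d m h 3) x) := by
    refine Or.inr (Or.inr (Or.inr (Or.inl ⟨3, ppv k d m h 3, x, p1, x, le_refl 3,
      by omega, rfl, rfl, memw2, memw1, rfl, Or.inr ?_⟩)))
    intro j hj
    simp only [hp1]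
    rw [if_neg (by omega)]
  exact ⟨2, le_refl 2, ⟨_, hedge1, _, hedge2, rfl⟩⟩

/-- The hub for `α ∈ B_i`, `4 ≤ i ≤ k-2`: any vertex of `L_4` of the canonical form is
reachable within `3` steps. -/
lemma hub4 (hk : 5 ≤ k) (hd : 1 ≤ d) (hone : ones d ∈ S) {i : ℕ}
    {pα : Fin k → Option (Vec d)} {xα : Fin (k - 1) → Fin d}
    (hi4 : 4 ≤ i) (hik : i ≤ k - 2)
    (memα : Vert.node (Tag.B i) pα xα ∈ setB k d S i)
    (m : ℕ) (h : Fin k → Vec d) (x : Fin (k - 1) → Fin d)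
    (hS : ∀ t, h t ∈ S) (hx : ∀ (t : Fin k) (ℓ : Fin (k - 1)), h t (x ℓ) = true) :
    DistLE (Adj k d S) (Vert.node (Tag.B i) pα xα)
      (Vert.node (Tag.L 4) (ppv k d m h 4) x) 3 := by
  set pA : Fin k → Option (Vec d) :=
    fun t => if (t : ℕ) < k - i then ppv k d m h 4 t else none with hpA
  set x9 : Fin (k - 1) → Fin d := fun _ => (⟨0, by omega⟩ : Fin d) with hx9
  have memA : Vert.node (Tag.A i) pA x9 ∈ setA k d S i := by
    refine ⟨pA, x9, rfl, hi4, by omega, ?_, fun ℓ => rfl⟩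
    intro t
    constructor
    · intro hc
      obtain ⟨a, ha, he⟩ := ((ppv_fills hone hS m 4) t).1 (Or.inl (by omega))
      exact ⟨a, ha, by simp only [hpA]; rw [if_pos hc]; exact he⟩
    · intro hc
      simp only [hpA]
      rw [if_neg hc]
  have memw4' : Vert.node (Tag.L' 4) (ppv k d m h 4) x ∈ setL' k d S 4 :=
    vL'_mem hone hS (by omega) (by omega) m
  have memw4 : Vert.node (Tag.L 4) (ppv k d m h 4) x ∈ setL k d S 4 :=
    vL_memL hone hS hx (by omega) (by omega) m
  have hedge1 : Adj k d S (Vert.node (Tag.B i) pα xα) (Vert.node (Tag.A i) pA x9) :=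
    Or.inr (Or.inr (Or.inr (Or.inr (Or.inr (Or.inr (Or.inr (Or.inl
      ⟨i, hi4, hik, memα, memA⟩)))))))
  have hedge2 : Adj k d S (Vert.node (Tag.A i) pA x9)
      (Vert.node (Tag.L' 4) (ppv k d m h 4) x) := by
    refine Or.inr (Or.inr (Or.inr (Or.inr (Or.inr (Or.inl (Or.inr (Or.inl
      ⟨i, pA, x9, ppv k d m h 4, x, memA, memw4', rfl, rfl, ?_⟩)))))))
    intro j hj
    simp only [hpA]
    rw [if_pos hj]
  have hedge3 : Adj k d S (Vert.node (Tag.L' 4) (ppv k d m h 4) x)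
      (Vert.node (Tag.L 4) (ppv k d m h 4) x) :=
    Or.inr (Or.inr (Or.inr (Or.inr (Or.inl ⟨Tag.L' 4, Tag.L 4, ppv k d m h 4, x, x,
      rfl, rfl, tagL'L _ _ _ _ _ _, Or.inr (Or.inl ⟨4, memw4', memw4⟩)⟩))))
  exact ⟨3, le_refl 3, ⟨_, hedge1, _, hedge2, _, hedge3, rfl⟩⟩

end Hubs

/-- **Section 4.2, Case 5.**  Assume `S` is a NO instance of `k`-OV:
every `k` vectors of `S` (repetitions allowed) have a common coordinate at which they
all equal `1`.  Then for every vertex `α ∈ B` and every vertex `β ∈ V \ {u,v}`, we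
have `d(α,β) ≤ k`. -/
theorem case5_no_instance (k d : ℕ) (hk : 5 ≤ k) (hd : 1 ≤ d)
    (S : Finset (Vec d)) (hone : ones d ∈ S)
    (hno : ∀ f : Fin k → Vec d, (∀ j, f j ∈ S) → ∃ x : Fin d, ∀ j, f j x = true)
    (α : Vert k d) (hα : α ∈ setBall k d S)
    (β : Vert k d) (hβ : β ∈ VertexSet k d S) (hβu : β ≠ Vert.uu) (hβv : β ≠ Vert.vv) :
    DistLE (Adj k d S) α β k := by
  obtain ⟨Bi, hBi⟩ := Set.mem_iUnion.mp hα
  obtain ⟨pα, xα, rfl, hi3, hik2, hfα, hzα⟩ := hBi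
  have memα : Vert.node (Tag.B Bi) pα xα ∈ setB k d S Bi :=
    ⟨pα, xα, rfl, hi3, hik2, hfα, hzα⟩
  simp only [VertexSet, Set.mem_union, Set.mem_insert_iff, Set.mem_singleton_iff,
    setLall, setL'all, setAall, setBall, Set.mem_iUnion] at hβ
  rcases hβ with ((((⟨m, hm⟩ | ⟨m, hm⟩) | ⟨m, hm⟩) | ⟨m, hm⟩) | hu | hv)
  rotate_left 4
  · exact absurd hu hβu
  · exact absurd hv hβv
  all_goals {
    have main : ∀ (s c : ℕ), 3 ≤ s → s + 2 ≤ k → c + 1 ≤ s → c + s ≤ k + 1 →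
        (∀ (m' : ℕ) (h : Fin k → Vec d) (x : Fin (k - 1) → Fin d),
          (∀ t, h t ∈ S) → (∀ (t : Fin k) (ℓ : Fin (k - 1)), h t (x ℓ) = true) →
          DistLE (Adj k d S) (Vert.node (Tag.B Bi) pα xα)
            (Vert.node (Tag.L s) (ppv k d m' h s) x) c) →
        DistLE (Adj k d S) (Vert.node (Tag.B Bi) pα xα) β k := by
      intro s c hs3 hsk hcs hcsk hub
      first
      | exact master_L hk hone hno hs3 hsk hcs hcsk hub hm
      | exact master_L' hk hone hno hs3 hsk hcs hcsk hub hm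
      | exact master_A hk hd hone hno hs3 hsk hcs hcsk hub hm
      | exact master_B hk hone hno hs3 hsk hcs hcsk hub hm
    rcases (by omega : Bi = 3 ∨ 4 ≤ Bi) with h3 | h4
    · subst h3
      exact main 3 2 (by omega) (by omega) (by omega) (by omega)
        (fun m' h x hS hx => hub3 hk hone memα hfα m' h x hS hx)
    · exact main 4 3 (by omega) (by omega) (by omega) (by omega)
        (fun m' h x hS hx => hub4 hk hd hone h4 hik2 memα m' h x hS hx) }

end DiamLB
end
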